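/- arXiv:1706.08141 — 6 statements merged into one kernel-verified Lean document; each statement's English description precedes it below -/
import Mathlib

section
/- Let f : ℝᵖ → ℝ be convex, continuously differentiable, and L-smooth. Then for all x, y ∈ ℝᵖ (co-coercivity): ⟨∇f(x) − ∇f(y), x − y⟩ ≥ (1/L)∥∇f(x) − ∇f(y)∥². Equivalently, with γ = 0 the quadratic form 2L⟨x − y, ∇f(x) − ∇f(y)⟩ − 2∥∇f(x) − ∇f(y)∥² is nonnegative. -/
/-!
Along the segment from `x` to `y`, the Lipschitz bound on `∇ f` makes
`t ↦ f (x + t • (y - x)) - t ⟪∇ f x, y - x⟫ - (L / 2) t² ‖y - x‖²` antitone, which gives the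
quadratic upper bound `f y ≤ f x + ⟪∇ f x, y - x⟫ + (L / 2) ‖y - x‖²`. Comparing the convexity lower
bound at `x` with this upper bound at `y`, both taken at the gradient step
`z = y - L⁻¹ (∇ f y - ∇ f x)`, sharpens convexity by `‖∇ f y - ∇ f x‖² / (2L)`; adding this with
`x` and `y` exchanged gives co-coercivity.
-/

open Set
open scoped RealInnerProductSpace Gradient

section

variable {E : Type*} [NormedAddCommGroup E] [InnerProductSpace ℝ E] [CompleteSpace E]
  {f : E → ℝ}

theorem hasDerivAt_comp_add_smul {x v : E} {t : ℝ} (hf : DifferentiableAt ℝ f (x + t • v)) :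
    HasDerivAt (fun s : ℝ => f (x + s • v)) ⟪∇ f (x + t • v), v⟫ t := by
  have hline : HasDerivAt (fun s : ℝ => x + s • v) v t := by
    simpa using ((hasDerivAt_id t).smul_const v).const_add x
  exact hf.hasGradientAt.hasFDerivAt.comp_hasDerivAt t hline

theorem le_add_inner_gradient_add_sq {L : ℝ} (hf : Differentiable ℝ f)
    (hsmooth : ∀ x y, ‖∇ f x - ∇ f y‖ ≤ L * ‖x - y‖) (x y : E) :
    f y ≤ f x + ⟪∇ f x, y - x⟫ + L / 2 * ‖y - x‖ ^ 2 := by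
  set v := y - x
  let g : ℝ → ℝ := fun t => f (x + t • v) - t * ⟪∇ f x, v⟫ - L / 2 * t ^ 2 * ‖v‖ ^ 2
  have hg : ∀ t, HasDerivAt g (⟪∇ f (x + t • v) - ∇ f x, v⟫ - L * t * ‖v‖ ^ 2) t := by
    intro t
    refine (((hasDerivAt_comp_add_smul (hf _)).sub ((hasDerivAt_id t).mul_const _)).sub
      (((hasDerivAt_pow 2 t).const_mul (L / 2)).mul_const _)).congr_deriv ?_
    rw [inner_sub_left]
    ring
  have hanti : AntitoneOn g (Icc 0 1) := by
    refine antitoneOn_of_deriv_nonpos (convex_Icc 0 1)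
      (fun t _ => (hg t).continuousAt.continuousWithinAt)
      (fun t _ => (hg t).differentiableAt.differentiableWithinAt) ?_
    intro t ht
    rw [interior_Icc] at ht
    rw [(hg t).deriv, sub_nonpos]
    calc ⟪∇ f (x + t • v) - ∇ f x, v⟫ ≤ ‖∇ f (x + t • v) - ∇ f x‖ * ‖v‖ := real_inner_le_norm _ _
      _ ≤ L * ‖t • v‖ * ‖v‖ := by
        gcongr
        simpa using hsmooth (x + t • v) x
      _ = L * t * ‖v‖ ^ 2 := by rw [norm_smul, Real.norm_of_nonneg ht.1.le]; ring
  have hends := hanti (left_mem_Icc.2 zero_le_one) (right_mem_Icc.2 zero_le_one) zero_le_one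
  simp only [g, v, one_smul, zero_smul, add_zero, add_sub_cancel] at hends
  linarith

theorem add_inner_gradient_add_sq_gradient_sub_le {L : ℝ} (hf : Differentiable ℝ f)
    (hconv : ∀ x y, f y + ⟪∇ f y, x - y⟫ ≤ f x)
    (hsmooth : ∀ x y, ‖∇ f x - ∇ f y‖ ≤ L * ‖x - y‖) (x y : E) :
    f x + ⟪∇ f x, y - x⟫ + 1 / (2 * L) * ‖∇ f y - ∇ f x‖ ^ 2 ≤ f y := by
  set g := ∇ f y - ∇ f x
  set z := y - L⁻¹ • g
  have hzx : z - x = (y - x) - L⁻¹ • g := sub_right_comm _ _ _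
  have hzy : z - y = -(L⁻¹ • g) := sub_sub_cancel_left _ _
  have hg : ⟪∇ f y, g⟫ - ⟪∇ f x, g⟫ = ‖g‖ ^ 2 := by
    rw [← inner_sub_left, real_inner_self_eq_norm_sq]
  -- holds for every `L`, including `L = 0` where `0⁻¹ = 0`
  have hL : L * L⁻¹ ^ 2 = L⁻¹ := by simpa [sq, mul_assoc] using inv_mul_mul_self L⁻¹
  have hA := hconv z x
  have hB := le_add_inner_gradient_add_sq hf hsmooth y z
  rw [hzx, inner_sub_right, real_inner_smul_right] at hA
  rw [hzy, inner_neg_right, real_inner_smul_right, norm_neg, norm_smul, mul_pow,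
    Real.norm_eq_abs, sq_abs] at hB
  have hgap : L⁻¹ * ⟪∇ f y, g⟫ - L⁻¹ * ⟪∇ f x, g⟫ - L / 2 * (L⁻¹ ^ 2 * ‖g‖ ^ 2)
      = 1 / (2 * L) * ‖g‖ ^ 2 := by
    linear_combination L⁻¹ * hg - ‖g‖ ^ 2 / 2 * hL
  linarith

theorem one_div_mul_sq_norm_gradient_sub_le_inner {L : ℝ} (hf : Differentiable ℝ f)
    (hconv : ∀ x y, f y + ⟪∇ f y, x - y⟫ ≤ f x)
    (hsmooth : ∀ x y, ‖∇ f x - ∇ f y‖ ≤ L * ‖x - y‖) (x y : E) :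
    1 / L * ‖∇ f x - ∇ f y‖ ^ 2 ≤ ⟪∇ f x - ∇ f y, x - y⟫ := by
  have hxy := add_inner_gradient_add_sq_gradient_sub_le hf hconv hsmooth x y
  have hyx := add_inner_gradient_add_sq_gradient_sub_le hf hconv hsmooth y x
  rw [norm_sub_rev, inner_sub_right] at hxy
  rw [inner_sub_right] at hyx
  rw [inner_sub_left, inner_sub_right, inner_sub_right]
  have hhalves : 1 / L * ‖∇ f x - ∇ f y‖ ^ 2
      = 1 / (2 * L) * ‖∇ f x - ∇ f y‖ ^ 2 + 1 / (2 * L) * ‖∇ f x - ∇ f y‖ ^ 2 := by ring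
  linarith

end

theorem stmt_9 (p : ℕ) (f : EuclideanSpace ℝ (Fin p) → ℝ) (L : ℝ) (hL : 0 < L)
    (hdiff : ContDiff ℝ 1 f)
    (hconv : ∀ x y, f x ≥ f y + (inner ℝ (gradient f y) (x - y) : ℝ))
    (hsmooth : ∀ x y, ‖gradient f x - gradient f y‖ ≤ L * ‖x - y‖) :
    ∀ x y : EuclideanSpace ℝ (Fin p),
      ((inner ℝ (gradient f x - gradient f y) (x - y) : ℝ)
          ≥ (1 / L) * ‖gradient f x - gradient f y‖ ^ 2) ∧
      2 * L * (inner ℝ (x - y) (gradient f x - gradient f y) : ℝ)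
          - 2 * ‖gradient f x - gradient f y‖ ^ 2 ≥ 0 := by
  intro x y
  have hcoco := one_div_mul_sq_norm_gradient_sub_le_inner (hdiff.differentiable one_ne_zero)
    hconv hsmooth x y
  refine ⟨hcoco, ?_⟩
  have hscaled := mul_le_mul_of_nonneg_left hcoco (by positivity : 0 ≤ 2 * L)
  rw [← mul_assoc, mul_assoc 2 L, mul_one_div_cancel hL.ne', mul_one] at hscaled
  rw [real_inner_comm]
  linarith
end

section
/- Let ρ² = 1 − min{(2Lα − 1)/((Lα − 1)n), 2mα − αm²/((1 − Lα)L)} with 0 < m ≤ L, n ≥ 1, and 0 < α ≤ 1/(2L). Then the choice p₁ = 1/L, p₂ = 1/α, λ₁ = 0, λ₂ = 1/L satisfies: (i) p₁ + α²p₂ − 2λ₂ ≤ 0; (ii) ρ² ≥ 1 − 1/n − (α⁴p₂²/(p₁ + α²p₂ − 2λ₂) − α²p₂)/(np₁); and (iii) ρ² ≥ 1 − 2(λ₁+λ₂)mL/p₂ − (−αp₂ + (L+m)(λ₁+λ₂))²/((p₁ + α²p₂ − 2(λ₁+λ₂))p₂). -/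
/-!
With `p₁ = λ₂ = 1/L` and `p₂ = 1/α`, the Schur pivot `p₁ + α²p₂ - 2λ₂` equals `(Lα - 1)/L`,
which is negative since `Lα ≤ 1/2`. Substituting it, the right-hand sides of (ii) and (iii)
reduce exactly to `1` minus the first, resp. second, argument of the `min` defining `ρ²`.
-/

namespace SAGA

variable {L α : ℝ}

theorem lmi_pivot_eq (hL : L ≠ 0) :
    1 / L + α ^ 2 * (1 / α) - 2 * (1 / L) = (L * α - 1) / L := by
  field_simp
  ring

theorem lmi_variance_bound_eq (hL : L ≠ 0) (hLα : L * α ≠ 1) (n : ℝ) :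
    1 - 1 / n - (α ^ 4 * (1 / α) ^ 2 / (1 / L + α ^ 2 * (1 / α) - 2 * (1 / L))
        - α ^ 2 * (1 / α)) / (n * (1 / L)) =
      1 - (2 * L * α - 1) / ((L * α - 1) * n) := by
  have hLα' : α * L - 1 ≠ 0 := by rwa [mul_comm, sub_ne_zero]
  set X := α ^ 4 * (1 / α) ^ 2 / (1 / L + α ^ 2 * (1 / α) - 2 * (1 / L)) - α ^ 2 * (1 / α)
    with hX
  have hXL : X * L = (2 * L * α - 1) / (L * α - 1) - 1 := by
    rw [hX, lmi_pivot_eq hL]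
    field_simp
    ring
  rw [mul_one_div, div_div_eq_mul_div, hXL, ← div_div]
  ring

theorem lmi_contraction_bound_eq (hL : L ≠ 0) (hα : α ≠ 0) (hLα : L * α ≠ 1) (m : ℝ) :
    1 - 2 * (1 / L) * m * L / (1 / α) -
        (-(α * (1 / α)) + (L + m) * (1 / L)) ^ 2 /
          ((1 / L + α ^ 2 * (1 / α) - 2 * (1 / L)) * (1 / α)) =
      1 - (2 * m * α - α * m ^ 2 / ((1 - L * α) * L)) := by
  have hLα' : 1 - L * α ≠ 0 := sub_ne_zero.mpr hLα.symm
  rw [lmi_pivot_eq hL]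
  field_simp
  ring

end SAGA

theorem stmt_13_general (m L α : ℝ) (n : ℕ)
    (hα : 0 < α) (hα2 : α ≤ 1 / (2 * L)) :
    letI ρ2 : ℝ := 1 - min ((2 * L * α - 1) / ((L * α - 1) * n))
        (2 * m * α - α * m ^ 2 / ((1 - L * α) * L))
    letI p₁ : ℝ := 1 / L
    letI p₂ : ℝ := 1 / α
    letI l₁ : ℝ := 0
    letI l₂ : ℝ := 1 / L
    (p₁ + α ^ 2 * p₂ - 2 * l₂ ≤ 0) ∧
    (ρ2 ≥ 1 - 1 / n -
      (α ^ 4 * p₂ ^ 2 / (p₁ + α ^ 2 * p₂ - 2 * l₂) - α ^ 2 * p₂) / (n * p₁)) ∧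
    (ρ2 ≥ 1 - 2 * (l₁ + l₂) * m * L / p₂ -
      (-(α * p₂) + (L + m) * (l₁ + l₂)) ^ 2 / ((p₁ + α ^ 2 * p₂ - 2 * (l₁ + l₂)) * p₂)) := by
  have hL : 0 < L := by
    have := one_div_pos.mp (hα.trans_le hα2)
    linarith
  have hLα : L * α ≤ 1 / 2 := by
    rw [le_div_iff₀ (by positivity)] at hα2
    linarith
  simp only [zero_add]
  refine ⟨?_, ?_, ?_⟩
  · rw [SAGA.lmi_pivot_eq hL.ne']
    exact div_nonpos_of_nonpos_of_nonneg (by linarith) hL.le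
  · rw [SAGA.lmi_variance_bound_eq hL.ne' (by linarith)]
    exact sub_le_sub_left (min_le_left _ _) 1
  · rw [SAGA.lmi_contraction_bound_eq hL.ne' hα.ne' (by linarith)]
    exact sub_le_sub_left (min_le_right _ _) 1

theorem stmt_13 (m L α : ℝ) (n : ℕ)
    (hm : 0 < m) (hmL : m ≤ L) (hn : 1 ≤ n) (hα : 0 < α) (hα2 : α ≤ 1 / (2 * L)) :
    letI ρ2 : ℝ := 1 - min ((2 * L * α - 1) / ((L * α - 1) * n))
        (2 * m * α - α * m ^ 2 / ((1 - L * α) * L))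
    letI p₁ : ℝ := 1 / L
    letI p₂ : ℝ := 1 / α
    letI l₁ : ℝ := 0
    letI l₂ : ℝ := 1 / L
    (p₁ + α ^ 2 * p₂ - 2 * l₂ ≤ 0) ∧
    (ρ2 ≥ 1 - 1 / n -
      (α ^ 4 * p₂ ^ 2 / (p₁ + α ^ 2 * p₂ - 2 * l₂) - α ^ 2 * p₂) / (n * p₁)) ∧
    (ρ2 ≥ 1 - 2 * (l₁ + l₂) * m * L / p₂ -
      (-(α * p₂) + (L + m) * (l₁ + l₂)) ^ 2 / ((p₁ + α ^ 2 * p₂ - 2 * (l₁ + l₂)) * p₂)) :=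
  stmt_13_general m L α n hα hα2
end

section
/- Let 0 < m ≤ L, n ≥ 1, 0 < α ≤ 1/(2L), and let b ∈ [2Lα, 1]. Define ρ² = 1 − min{(2Lα − b)/((Lα − b)n), 2(1−b)mα − αm²(1−b)²/((2 − b − Lα)L)}. Then 0 ≤ ρ² ≤ 1, and the choice p₁ = b/L, p₂ = 1/α, λ₁ = (1−b)/L, λ₂ = b/L makes p₁ > 0, λ₁ ≥ 0 and satisfies the scalar conditions p₁ + α²p₂ − 2λ₂ ≤ 0, ρ² ≥ 1 − 1/n − (α⁴p₂²/(p₁+α²p₂−2λ₂) − α²p₂)/(np₁), and ρ² ≥ 1 − 2λ₁mL/p₂ − (−αp₂ + (L+m)λ₁ + Lλ₂)²/((p₁ + α²p₂ − 2λ₁ − 2λ₂)p₂). -/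
/-!
With `p₁ = λ₂ = b/L`, `p₂ = 1/α`, `λ₁ = (1-b)/L` the right-hand sides of the two rate conditions
simplify to exactly `1 - A` and `1 - B`, where `A` and `B` are the two arguments of the `min`
defining `ρ²`. So both conditions hold by `min_le_left` / `min_le_right`, and what remains is
`0 ≤ A ≤ 1` and `0 ≤ B`; the latter reduces to `m (1 - b) ≤ 2 L (2 - b - L α)`.
-/

theorem saga_first_rate_mem_Icc {L α b : ℝ} {n : ℕ} (hLα : 0 ≤ L * α) (hb : 2 * L * α ≤ b)
    (hn : 1 ≤ n) : (2 * L * α - b) / ((L * α - b) * n) ∈ Set.Icc (0 : ℝ) 1 := by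
  have hn' : (1 : ℝ) ≤ n := by exact_mod_cast hn
  rw [← neg_div_neg_eq, neg_sub, ← neg_mul, neg_sub]
  have hden : 0 ≤ (b - L * α) * n := mul_nonneg (by linarith) (by linarith)
  refine ⟨div_nonneg (by linarith) hden, div_le_one_of_le₀ ?_ hden⟩
  nlinarith [mul_nonneg (by linarith : 0 ≤ b - L * α) (by linarith : (0 : ℝ) ≤ n - 1)]

theorem saga_second_rate_nonneg {m L α b : ℝ} (hm : 0 ≤ m) (hmL : m ≤ L) (hL : 0 < L)
    (hα : 0 ≤ α) (hαL : 2 * L * α ≤ 1) (hb : b ≤ 1) :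
    0 ≤ 2 * (1 - b) * m * α - α * m ^ 2 * (1 - b) ^ 2 / ((2 - b - L * α) * L) := by
  have hkey : m * (1 - b) ≤ 2 * (2 - b - L * α) * L := by
    nlinarith [mul_le_mul_of_nonneg_right hmL (sub_nonneg.mpr hb)]
  have hD : 0 < (2 - b - L * α) * L := mul_pos (by linarith) hL
  rw [sub_nonneg, div_le_iff₀ hD]
  have hc : 0 ≤ α * m * (1 - b) := mul_nonneg (mul_nonneg hα hm) (sub_nonneg.mpr hb)
  nlinarith [mul_le_mul_of_nonneg_left hkey hc]

theorem saga_lmi_pivot_eq {L α b : ℝ} (hL : L ≠ 0) :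
    b / L + α ^ 2 * (1 / α) - 2 * (b / L) = (L * α - b) / L := by
  field_simp
  ring

theorem saga_first_condition_eq {L α b n : ℝ} (hL : L ≠ 0) (hb : b ≠ 0) (hn : n ≠ 0)
    (hLαb : L * α - b ≠ 0) :
    1 - 1 / n - (α ^ 4 * (1 / α) ^ 2 / (b / L + α ^ 2 * (1 / α) - 2 * (b / L)) - α ^ 2 * (1 / α))
      / (n * (b / L)) = 1 - (2 * L * α - b) / ((L * α - b) * n) := by
  -- `field_simp` only recognises this side condition in its normal form `α * L - b`
  have hαLb : α * L - b ≠ 0 := by rwa [mul_comm]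
  rw [saga_lmi_pivot_eq hL]
  field_simp
  ring

theorem saga_second_condition_eq {m L α b : ℝ} (hL : L ≠ 0) (hα : α ≠ 0)
    (hD : 2 - b - L * α ≠ 0) :
    1 - 2 * ((1 - b) / L) * m * L / (1 / α) -
      (-(α * (1 / α)) + (L + m) * ((1 - b) / L) + L * (b / L)) ^ 2 /
        ((b / L + α ^ 2 * (1 / α) - 2 * ((1 - b) / L) - 2 * (b / L)) * (1 / α))
      = 1 - (2 * (1 - b) * m * α - α * m ^ 2 * (1 - b) ^ 2 / ((2 - b - L * α) * L)) := by
  have hnum : -(α * (1 / α)) + (L + m) * ((1 - b) / L) + L * (b / L) = m * (1 - b) / L := by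
    field_simp
    ring
  have hden : (b / L + α ^ 2 * (1 / α) - 2 * ((1 - b) / L) - 2 * (b / L)) * (1 / α)
      = -((2 - b - L * α) / (L * α)) := by
    field_simp
    ring
  rw [hnum, hden]
  field_simp
  ring

theorem stmt_14 (m L α b : ℝ) (n : ℕ)
    (hm : 0 < m) (hmL : m ≤ L) (hn : 1 ≤ n) (hα : 0 < α) (hα2 : α ≤ 1 / (2 * L))
    (hb1 : 2 * L * α ≤ b) (hb2 : b ≤ 1) :
    letI ρ2 : ℝ := 1 - min ((2 * L * α - b) / ((L * α - b) * n))
        (2 * (1 - b) * m * α - α * m ^ 2 * (1 - b) ^ 2 / ((2 - b - L * α) * L))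
    letI p₁ : ℝ := b / L
    letI p₂ : ℝ := 1 / α
    letI l₁ : ℝ := (1 - b) / L
    letI l₂ : ℝ := b / L
    (0 ≤ ρ2 ∧ ρ2 ≤ 1) ∧ (0 < p₁) ∧ (0 ≤ l₁) ∧
    (p₁ + α ^ 2 * p₂ - 2 * l₂ ≤ 0) ∧
    (ρ2 ≥ 1 - 1 / n -
      (α ^ 4 * p₂ ^ 2 / (p₁ + α ^ 2 * p₂ - 2 * l₂) - α ^ 2 * p₂) / (n * p₁)) ∧
    (ρ2 ≥ 1 - 2 * l₁ * m * L / p₂ -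
      (-(α * p₂) + (L + m) * l₁ + L * l₂) ^ 2 / ((p₁ + α ^ 2 * p₂ - 2 * l₁ - 2 * l₂) * p₂)) := by
  have hL : 0 < L := hm.trans_le hmL
  have hαL : 2 * L * α ≤ 1 := by rwa [le_div_iff₀ (by positivity), mul_comm] at hα2
  have hLα : 0 < L * α := mul_pos hL hα
  have hLαb : L * α < b := by linarith
  obtain ⟨hA0, hA1⟩ := saga_first_rate_mem_Icc hLα.le hb1 hn
  have hB0 := saga_second_rate_nonneg hm.le hmL hL hα.le hαL hb2
  refine ⟨⟨sub_nonneg.mpr ((min_le_left _ _).trans hA1), sub_le_self _ (le_min hA0 hB0)⟩,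
    div_pos (by linarith) hL, div_nonneg (by linarith) hL.le, ?_, ?_, ?_⟩
  · rw [saga_lmi_pivot_eq hL.ne']
    exact div_nonpos_of_nonpos_of_nonneg (by linarith) hL.le
  · exact (saga_first_condition_eq hL.ne' (hLα.trans hLαb).ne' (by positivity)
      (sub_neg.mpr hLαb).ne).trans_le
      (sub_le_sub_left (min_le_left _ _) 1)
  · exact (saga_second_condition_eq hL.ne' hα.ne' (by linarith)).trans_le
      (sub_le_sub_left (min_le_right _ _) 1)
end

section
/- Let 0 < m ≤ L, n ≥ 1, α = m/(4(m²n + L²)), and b = 2(m²n + L²)/L². Then 2 ≤ b ≤ 3m/(4αL²), and min{(b−2)/((b−1)n), (3mα)/2 − 2bL²α²} ≥ m²/(8(m²n + L²)). Consequently 1 − min{(b−2)/((b−1)n), (3mα)/2 − 2bL²α²} ≤ 1 − m²/(8(m²n + L²)). -/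
/-!
Write `S = m²n + L²`, so that `α = m / (4S)` and `b = 2S / L²`. Then `4αL² = mL² / S`, so the
step-size condition reads `2S / L² ≤ 3S / L²`. The first term of the minimum simplifies to
`2m² / (2m²n + L²)`, which dominates `m² / (8S)` because `2m²n + L² ≤ 8S`, and `α` is exactly the
step size for which the second term equals `m² / (8S)`.
-/

lemma two_le_two_mul_add_sq_div_sq {a L : ℝ} (ha : 0 ≤ a) (hL : L ≠ 0) :
    2 ≤ 2 * (a + L ^ 2) / L ^ 2 := by
  rw [le_div_iff₀ (by positivity)]
  linarith

lemma two_mul_div_sq_le_three_mul_div {m L S : ℝ} (hm : m ≠ 0) (hL : L ≠ 0) (hS : 0 < S) :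
    2 * S / L ^ 2 ≤ 3 * m / (4 * (m / (4 * S)) * L ^ 2) := by
  have hrhs : 3 * m / (4 * (m / (4 * S)) * L ^ 2) = 3 * S / L ^ 2 := by
    field_simp
  rw [hrhs]
  gcongr
  norm_num

lemma div_sub_two_div_div_sub_one_mul_eq {m L n : ℝ} (hL : L ≠ 0) (hn : 0 < n) :
    (2 * (m ^ 2 * n + L ^ 2) / L ^ 2 - 2) / ((2 * (m ^ 2 * n + L ^ 2) / L ^ 2 - 1) * n)
      = 2 * m ^ 2 / (2 * m ^ 2 * n + L ^ 2) := by
  have hb₂ : 2 * (m ^ 2 * n + L ^ 2) / L ^ 2 - 2 = 2 * m ^ 2 * n / L ^ 2 := by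
    field_simp
    ring
  have hb₁ : 2 * (m ^ 2 * n + L ^ 2) / L ^ 2 - 1 = (2 * m ^ 2 * n + L ^ 2) / L ^ 2 := by
    field_simp
    ring
  have : 2 * m ^ 2 * n + L ^ 2 ≠ 0 := by positivity
  rw [hb₂, hb₁]
  field_simp

lemma sq_div_le_two_mul_sq_div {m L n : ℝ} (hL : L ≠ 0) (hn : 0 ≤ n) :
    m ^ 2 / (8 * (m ^ 2 * n + L ^ 2)) ≤ 2 * m ^ 2 / (2 * m ^ 2 * n + L ^ 2) := calc
  m ^ 2 / (8 * (m ^ 2 * n + L ^ 2)) ≤ m ^ 2 / (2 * m ^ 2 * n + L ^ 2) := by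
    gcongr
    nlinarith [sq_nonneg m, sq_nonneg L, mul_nonneg (sq_nonneg m) hn]
  _ ≤ 2 * m ^ 2 / (2 * m ^ 2 * n + L ^ 2) := by
    gcongr
    linarith [sq_nonneg m]

lemma three_mul_div_two_sub_eq_sq_div {K : Type*} [Field K] [CharZero K] {m L S : K}
    (hL : L ≠ 0) (hS : S ≠ 0) :
    3 * m * (m / (4 * S)) / 2 - 2 * (2 * S / L ^ 2) * L ^ 2 * (m / (4 * S)) ^ 2
      = m ^ 2 / (8 * S) := by
  field_simp
  ring

theorem stmt_15 (m L : ℝ) (n : ℕ) (hm : 0 < m) (hmL : m ≤ L) (hn : 1 ≤ n) :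
    letI α : ℝ := m / (4 * (m ^ 2 * n + L ^ 2))
    letI b : ℝ := 2 * (m ^ 2 * n + L ^ 2) / L ^ 2
    (2 ≤ b ∧ b ≤ 3 * m / (4 * α * L ^ 2)) ∧
    (min ((b - 2) / ((b - 1) * n)) (3 * m * α / 2 - 2 * b * L ^ 2 * α ^ 2)
        ≥ m ^ 2 / (8 * (m ^ 2 * n + L ^ 2))) ∧
    (1 - min ((b - 2) / ((b - 1) * n)) (3 * m * α / 2 - 2 * b * L ^ 2 * α ^ 2)
        ≤ 1 - m ^ 2 / (8 * (m ^ 2 * n + L ^ 2))) := by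
  set α := m / (4 * (m ^ 2 * n + L ^ 2))
  set b := 2 * (m ^ 2 * n + L ^ 2) / L ^ 2
  have hL : L ≠ 0 := (hm.trans_le hmL).ne'
  have hn₀ : (0 : ℝ) < n := by exact_mod_cast hn
  have hS : 0 < m ^ 2 * n + L ^ 2 := by positivity
  have hmin : m ^ 2 / (8 * (m ^ 2 * n + L ^ 2))
      ≤ min ((b - 2) / ((b - 1) * n)) (3 * m * α / 2 - 2 * b * L ^ 2 * α ^ 2) := by
    refine le_min ?_ (three_mul_div_two_sub_eq_sq_div hL hS.ne').ge
    rw [div_sub_two_div_div_sub_one_mul_eq hL hn₀]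
    exact sq_div_le_two_mul_sq_div hL hn₀.le
  refine ⟨⟨two_le_two_mul_add_sq_div_sq (by positivity) hL,
    two_mul_div_sq_le_three_mul_div hm.ne' hL hS⟩, hmin, ?_⟩
  linarith
end

section
/- Let 0 < m ≤ L, n ≥ 1 a natural number with n² ≥ 50L/m, and α = 1/(5L). With the choices p₁ = α/L, p₄ = 0.5mα, λ₁ = 0, λ₂ = α/L, the rate ρ² = 1 − min{1/(2n), m/(20L)} satisfies the three inequalities: ρ² ≥ 1 − 1/n + 2αL/(n(1 − αL)); ρ² ≥ 1 − 1/n + 4/(n³mα(1 − Lα)); and ρ² ≥ 1 − 1.5mα + m²α/(L(1 − Lα)). -/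
/-!
With `α L = 1/5` every correction term becomes an explicit rational function: the first equals
`1/(2n)`, the second is `25L/(n³m)`, which is at most `1/(2n)` exactly when `n² ≥ 50L/m`, and
the third leaves the slack `3m/(10L) - m²/(4L²) = m/(20L) + m(L - m)/(4L²)`. Each condition
therefore holds for the corresponding argument of the minimum defining `ρ²`.
-/

section FinitoRate

variable {α L : ℝ}

theorem finito_slack₁_eq (hα : α * L = 1 / 5) (n : ℝ) :
    1 / n - 2 * α * L / (n * (1 - α * L)) = 1 / (2 * n) := by
  rw [mul_assoc, hα]
  rcases eq_or_ne n 0 with rfl | hn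
  · simp
  · field_simp
    ring

theorem finito_slack₂_ge (hα : L * α = 1 / 5) {m n : ℝ} (hm : 0 < m) (hn : 0 < n)
    (hbig : n ^ 2 ≥ 50 * L / m) :
    1 / (2 * n) ≤ 1 / n - 4 / (n ^ 3 * m * α * (1 - L * α)) := by
  have hL : L ≠ 0 := by rintro rfl; norm_num at hα
  have hα' : α = 1 / (5 * L) := by field_simp; linarith
  have hbig' : 50 * L ≤ n ^ 2 * m := (div_le_iff₀ hm).mp hbig
  have hterm : 4 / (n ^ 3 * m * α * (1 - L * α)) = 25 * L / (n ^ 3 * m) := by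
    rw [hα, hα']
    field_simp
    ring
  rw [hterm, ← sub_nonneg]
  have hslack :
      1 / n - 25 * L / (n ^ 3 * m) - 1 / (2 * n) = (n ^ 2 * m - 50 * L) / (2 * n ^ 3 * m) := by
    field_simp
    ring
  rw [hslack]
  apply div_nonneg <;> [linarith; positivity]

theorem finito_slack₃_ge (hα : L * α = 1 / 5) {m : ℝ} (hm : 0 < m) (hmL : m ≤ L) :
    m / (20 * L) ≤ 1.5 * m * α - m ^ 2 * α / (L * (1 - L * α)) := by
  have hL : 0 < L := hm.trans_le hmL
  have hα' : α = 1 / (5 * L) := by field_simp; linarith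
  have hslack : 1.5 * m * α - m ^ 2 * α / (L * (1 - L * α)) - m / (20 * L) =
      m * (L - m) / (4 * L ^ 2) := by
    rw [hα, hα']
    field_simp
    ring
  rw [← sub_nonneg, hslack]
  apply div_nonneg <;> [nlinarith; positivity]

end FinitoRate

theorem stmt_16_general (m L : ℝ) (n : ℕ)
    (hm : 0 < m) (hmL : m ≤ L)
    (hbig : (n : ℝ) ^ 2 ≥ 50 * L / m) :
    letI α : ℝ := 1 / (5 * L)
    letI ρ2 : ℝ := 1 - min (1 / (2 * (n : ℝ))) (m / (20 * L))
    (ρ2 ≥ 1 - 1 / n + 2 * α * L / (n * (1 - α * L))) ∧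
    (ρ2 ≥ 1 - 1 / n + 4 / (n ^ 3 * m * α * (1 - L * α))) ∧
    (ρ2 ≥ 1 - 1.5 * m * α + m ^ 2 * α / (L * (1 - L * α))) := by
  have hL : 0 < L := hm.trans_le hmL
  have hαL : 1 / (5 * L) * L = 1 / 5 := by field_simp
  have hLα : L * (1 / (5 * L)) = 1 / 5 := by rw [mul_comm, hαL]
  have hn : (0 : ℝ) < n := by
    have hpos : 0 < (n : ℝ) ^ 2 := lt_of_lt_of_le (by positivity) hbig
    exact_mod_cast Nat.pos_of_ne_zero (by rintro rfl; simp at hpos)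
  have hmin₁ := min_le_left (1 / (2 * (n : ℝ))) (m / (20 * L))
  have hmin₂ := min_le_right (1 / (2 * (n : ℝ))) (m / (20 * L))
  refine ⟨?_, ?_, ?_⟩
  · linarith [finito_slack₁_eq hαL n]
  · linarith [finito_slack₂_ge hLα hm hn hbig]
  · linarith [finito_slack₃_ge hLα hm hmL]

theorem stmt_16 (m L : ℝ) (n : ℕ)
    (hm : 0 < m) (hmL : m ≤ L) (hn : 1 ≤ n)
    (hbig : (n : ℝ) ^ 2 ≥ 50 * L / m) :
    letI α : ℝ := 1 / (5 * L)
    letI ρ2 : ℝ := 1 - min (1 / (2 * (n : ℝ))) (m / (20 * L))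
    (ρ2 ≥ 1 - 1 / n + 2 * α * L / (n * (1 - α * L))) ∧
    (ρ2 ≥ 1 - 1 / n + 4 / (n ^ 3 * m * α * (1 - L * α))) ∧
    (ρ2 ≥ 1 - 1.5 * m * α + m ^ 2 * α / (L * (1 - L * α))) :=
  stmt_16_general m L n hm hmL hbig
end

section
/- Let 0 < m ≤ L and n a natural number with n ≥ 48L²/m², and α = 1/(2nm). Then the rate ρ² = 1 − 1/(3n) satisfies: ρ² ≥ 1 − 1/n + 32/(9n³mα), and ρ² ≥ 1 − 1.25mα + 8L²α² + m²α/(L(2 + 3Lα)). (In particular n ≥ 48L²/m² together with L ≥ m implies n ≥ 11, which suffices for the first inequality.) -/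
/-!
With `α = 1/(2nm)` every term is a multiple of `mα = 1/(2n)`. The first inequality reduces to
`64/(9n²) ≤ 2/(3n)`, i.e. `n ≥ 32/3`. For the second, `m ≤ L` bounds the last term by `mα/2`,
and `48L² ≤ nm²` bounds `8L²α²` by `nm²α²/6 = mα/12`; since `5/4 - 1/12 - 1/2 = 2/3`, the
right-hand side is at most `1 - (2/3)mα = 1 - 1/(3n)`.
-/

section FinitoRate

variable {m L x α : ℝ}

lemma forty_eight_le_of_ge_div_sq (hm : 0 < m) (hmL : m ≤ L) (hx : x ≥ 48 * L ^ 2 / m ^ 2) :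
    48 ≤ x := by
  have : 48 ≤ 48 * L ^ 2 / m ^ 2 := by
    rw [le_div_iff₀ (by positivity)]
    nlinarith
  linarith

lemma mul_one_div_two_mul_mul (hm : m ≠ 0) : m * (1 / (2 * x * m)) = 1 / (2 * x) := by
  field_simp

lemma one_sub_one_div_three_mul_ge (hx : 32 / 3 ≤ x) (hmα : m * α = 1 / (2 * x)) :
    1 - 1 / (3 * x) ≥ 1 - 1 / x + 32 / (9 * x ^ 3 * m * α) := by
  have hx0 : 0 < x := by linarith
  have hsimp : 32 / (9 * x ^ 3 * m * α) = 64 / (9 * x ^ 2) := by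
    rw [mul_assoc, hmα]
    field_simp
    ring
  rw [hsimp, ge_iff_le, ← sub_nonneg]
  have : 1 - 1 / (3 * x) - (1 - 1 / x + 64 / (9 * x ^ 2)) = (2 / 3 * x - 64 / 9) / x ^ 2 := by
    field_simp
    ring
  rw [this]
  apply div_nonneg <;> nlinarith

lemma sq_div_mul_le_half_mul (hm : 0 < m) (hmL : m ≤ L) (hα : 0 ≤ α) :
    m ^ 2 * α / (L * (2 + 3 * L * α)) ≤ m * α / 2 := by
  have hL : 0 < L := hm.trans_le hmL
  rw [div_le_div_iff₀ (by positivity) two_pos]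
  have : m ^ 2 * α ≤ m * α * L := by nlinarith [mul_nonneg hm.le hα]
  nlinarith [mul_nonneg (mul_nonneg hm.le hα) (mul_nonneg hL.le hα)]

lemma eight_mul_sq_mul_sq_le (hx : 48 * L ^ 2 ≤ x * m ^ 2) (hmα : 2 * x * (m * α) = 1) :
    8 * L ^ 2 * α ^ 2 ≤ m * α / 12 := by
  calc 8 * L ^ 2 * α ^ 2 ≤ x * m ^ 2 * α ^ 2 / 6 := by nlinarith [sq_nonneg α]
    _ = m * α * (2 * x * (m * α)) / 12 := by ring
    _ = m * α / 12 := by rw [hmα, mul_one]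

end FinitoRate

theorem stmt_17 (m L : ℝ) (n : ℕ)
    (hm : 0 < m) (hmL : m ≤ L)
    (hbig : (n : ℝ) ≥ 48 * L ^ 2 / m ^ 2) :
    letI α : ℝ := 1 / (2 * n * m)
    letI ρ2 : ℝ := 1 - 1 / (3 * n)
    (ρ2 ≥ 1 - 1 / n + 32 / (9 * n ^ 3 * m * α)) ∧
    (ρ2 ≥ 1 - 1.25 * m * α + 8 * L ^ 2 * α ^ 2 + m ^ 2 * α / (L * (2 + 3 * L * α))) ∧
    11 ≤ n := by
  set α : ℝ := 1 / (2 * n * m)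
  have hn48 : (48 : ℝ) ≤ n := forty_eight_le_of_ge_div_sq hm hmL hbig
  have hn : (0 : ℝ) < n := by linarith
  have hmα : m * α = 1 / (2 * n) := mul_one_div_two_mul_mul hm.ne'
  have hα : 0 ≤ α := by positivity
  refine ⟨one_sub_one_div_three_mul_ge (by linarith) hmα, ?_, by exact_mod_cast (by linarith : (11 : ℝ) ≤ n)⟩
  have hsq : 8 * L ^ 2 * α ^ 2 ≤ m * α / 12 := by
    refine eight_mul_sq_mul_sq_le (x := n) ?_ (by rw [hmα]; field_simp)
    rw [ge_iff_le, div_le_iff₀ (by positivity)] at hbig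
    linarith
  have hlast := sq_div_mul_le_half_mul hm hmL hα
  have hρ2 : 1 - 1 / (3 * (n : ℝ)) = 1 - 2 / 3 * (m * α) := by
    rw [hmα]
    field_simp
  rw [hρ2, show (1.25 : ℝ) = 5 / 4 by norm_num]
  linarith
end
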